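/- Let n ≥ 1, let 0 ≤ k ≤ n−1, and set l := max{k, n−k−1}. For every i with 0 ≤ i ≤ l, the i-lexical matching M^i_{n,k} saturates every vertex in the smaller of the two levels k and k+1 of Q_n: if the binomial coefficient C(n,k) ≤ C(n,k+1), then every vertex of level k is incident to an edge of M^i_{n,k}, and if C(n,k+1) ≤ C(n,k), then every vertex of level k+1 is incident to an edge of M^i_{n,k}. -/

import Mathlib

/-- The Hamming weight of a bitstring of length `n`, i.e., its number of 1-bits. -/
def wt {n : ℕ} (x : Fin n → Bool) : ℕ := (Finset.univ.filter fun i => x i = true).card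

/-- The `n`-dimensional hypercube: vertices are bitstrings of length `n`, two of which are
adjacent iff they differ in exactly one position. -/
def cube (n : ℕ) : SimpleGraph (Fin n → Bool) where
  Adj x y := hammingDist x y = 1
  symm := by
    constructor; intro x y (h : hammingDist x y = 1)
    show hammingDist y x = 1; rwa [hammingDist_comm]
  loopless := by
    constructor; intro x (h : hammingDist x x = 1); simp [hammingDist_self] at h
/-- The number of 1-bits among the first `j` bits of `x` (interpreting a bitstring as a
lattice path, this determines the height after `j` steps). -/
def onesUpTo {n : ℕ} (x : Fin n → Bool) (j : ℕ) : ℕ :=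
  (Finset.univ.filter fun i : Fin n => i.val < j ∧ x i = true).card

/-- The height of the lattice path of `x` after `j` steps: number of 1s minus number of 0s
among the first `j` bits (appended steps beyond the length of `x` being down-steps). -/
def hgt {n : ℕ} (x : Fin n → Bool) (j : ℕ) : ℤ := 2 * (onesUpTo x j : ℤ) - (j : ℤ)

/-- The length of the extended lattice path `x^↑`: if the final height `2·wt x − n` is `≥ −1`,
down-steps are appended until the path ends at height `−1` (total length `2·wt x + 1`);
otherwise nothing is appended. -/
def extLen {n : ℕ} (x : Fin n → Bool) : ℕ := max n (2 * wt x + 1)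

/-- Position `j` (0-indexed) of the extended path `x^↑` is a down-step: either it is a 0-bit
of `x`, or one of the appended down-steps. -/
def isDownStep {n : ℕ} (x : Fin n → Bool) (j : ℕ) : Prop :=
  j < extLen x ∧ ∀ h : j < n, x ⟨j, h⟩ = false

/-- The `i`-lexical matching `M^i_{n,k}` between levels `k` and `k+1` of the `n`-cube, as a
relation: `lexUp n k i x y` holds iff `x` lies in level `k` and `y = M^{i,↑}_{n,k}(x)`, i.e.,
`y` is obtained from `x` by flipping to 1 the 0-bit at the `i`-th down-step of `x^↑` in the
order of decreasing starting height, ties broken from right to left, counting from 0,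
provided this down-step lies within `x`. -/
def lexUp (n k i : ℕ) (x y : Fin n → Bool) : Prop :=
  wt x = k ∧ ∃ d : ℕ, d < n ∧ isDownStep x d ∧
    ({j : ℕ | isDownStep x j ∧ (hgt x d < hgt x j ∨ (hgt x j = hgt x d ∧ d < j))}).ncard = i ∧
    y = fun t : Fin n => if t.val = d then true else x t

/-!
Read a vertex as a lattice path. If `C(n,k) ≤ C(n,k+1)`, i.e. `2k+1 ≤ n`, a vertex `x` of level
`k` ends at height `≤ -1`, so `x^↑ = x` has `n - k > i` down-steps and the `i`-th one lies in `x`.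
If `n ≤ 2k+1`, a vertex `y` of level `k+1` has `k+1 > i` up-steps; flipping the `i`-th of them
(decreasing height, ties left to right), at position `d`, gives a vertex `x` of level `k`, and it
remains to see that `d` is the `i`-th down-step of `x^↑`, a path of length `2k+1` from height `0`
to height `-1`. This is a telescoping count along that path: the potential `max (h - c) 0`, with
threshold `c = h(d)` up to `d` and `c - 1` after it, takes the same value at both ends, rises
exactly at the up-steps of `y` ranked before `d` and falls exactly at the down-steps of `x^↑`
ranked before `d`.
-/

open Finset Function

lemma exists_card_filter_lt_eq {ι α : Type*} [DecidableEq ι] [LinearOrder α] {κ : ι → α}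
    (hκ : Injective κ) (S : Finset ι) : ∀ i < #S, ∃ d ∈ S, #{j ∈ S | κ d < κ j} = i := by
  induction S using Finset.induction_on_min_value κ with
  | empty => simp
  | insert a S haS hmin ih =>
    intro i hi
    rw [card_insert_of_notMem haS, Nat.lt_succ_iff] at hi
    rcases hi.lt_or_eq with hi | rfl
    · obtain ⟨d, hdS, hd⟩ := ih i hi
      refine ⟨d, mem_insert_of_mem hdS, ?_⟩
      rw [filter_insert, if_neg (hmin d hdS).not_gt, hd]
    · refine ⟨a, mem_insert_self a S, ?_⟩
      have hlt : ∀ j ∈ S, κ a < κ j := fun j hj =>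
        (hmin j hj).lt_of_ne (hκ.ne (ne_of_mem_of_not_mem hj haS).symm)
      rw [filter_insert, if_neg (lt_irrefl _), filter_true_of_mem hlt]

lemma card_down_above_eq_card_up_above (h : ℕ → ℤ) (up : ℕ → Bool)
    (hstep : ∀ j, h (j + 1) = h j + if up j then 1 else -1) (h0 : h 0 = 0) {d L : ℕ}
    (hL : h L = -1) (hdL : d < L) (hd : up d = false) :
    #{j ∈ range L | up j = false ∧ (h d < h j ∨ h j = h d ∧ d < j)} =
      #{j ∈ range L | up j = true ∧ (j < d ∧ h d ≤ h j ∨ d < j ∧ h d ≤ h j + 1)} := by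
  set Φ : ℕ → ℤ := fun j => if j ≤ d then max (h j - h d) 0 else max (h j - h d + 1) 0
  have hΦ : ∀ j, Φ (j + 1) - Φ j =
      (if up j = true ∧ (j < d ∧ h d ≤ h j ∨ d < j ∧ h d ≤ h j + 1) then 1 else 0) -
      (if up j = false ∧ (h d < h j ∨ h j = h d ∧ d < j) then 1 else 0) := by
    intro j
    rcases lt_trichotomy j d with hj | rfl | hj <;> cases hu : up j <;>
      simp only [Φ, hstep j, hu, Bool.false_eq_true, Bool.true_eq_false, if_true, if_false,
        true_and, false_and] at hd ⊢ <;>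
      split_ifs <;> omega
  have hsum := sum_range_sub Φ L
  simp only [hΦ, sum_sub_distrib, ← natCast_card_filter] at hsum
  have hΦL : Φ L = Φ 0 := by simp only [Φ, hL, h0]; split_ifs <;> omega
  omega

section Bitstring

variable {n : ℕ}

-- Positions `j ≥ n` read as `false`: they are the down-steps appended in `x^↑`.
def bitAt (x : Fin n → Bool) (j : ℕ) : Bool := if h : j < n then x ⟨j, h⟩ else false

lemma bitAt_val (x : Fin n → Bool) (t : Fin n) : bitAt x t = x t := by
  simp [bitAt]

lemma lt_of_bitAt_eq_true {x : Fin n → Bool} {j : ℕ} (h : bitAt x j = true) : j < n := by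
  by_contra hj
  simp [bitAt, hj] at h

lemma onesUpTo_eq_card (x : Fin n → Bool) (j : ℕ) :
    onesUpTo x j = #{m ∈ range j | bitAt x m = true} := by
  have : {m ∈ range j | bitAt x m = true} =
      ({t : Fin n | t.val < j ∧ x t = true} : Finset (Fin n)).map Fin.valEmbedding := by
    ext m
    simp only [mem_filter, mem_range, mem_map, mem_univ, true_and, Fin.valEmbedding_apply]
    constructor
    · rintro ⟨hmj, hm⟩
      exact ⟨⟨m, lt_of_bitAt_eq_true hm⟩, ⟨hmj, by rwa [← bitAt_val x]⟩, rfl⟩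
    · rintro ⟨t, ⟨htj, ht⟩, rfl⟩
      exact ⟨htj, by rwa [bitAt_val]⟩
  rw [onesUpTo, this, card_map]

lemma onesUpTo_of_le (x : Fin n → Bool) {j : ℕ} (hj : n ≤ j) : onesUpTo x j = wt x := by
  unfold onesUpTo wt
  congr 1
  exact filter_congr fun t _ => by simp [lt_of_lt_of_le t.isLt hj]

lemma card_filter_bitAt_eq_true (x : Fin n → Bool) {m : ℕ} (hm : n ≤ m) :
    #{j ∈ range m | bitAt x j = true} = wt x := by
  rw [← onesUpTo_eq_card, onesUpTo_of_le x hm]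

lemma hgt_zero (x : Fin n → Bool) : hgt x 0 = 0 := by
  simp [hgt, onesUpTo_eq_card]

lemma hgt_succ (x : Fin n → Bool) (j : ℕ) :
    hgt x (j + 1) = hgt x j + if bitAt x j then 1 else -1 := by
  simp only [hgt, onesUpTo_eq_card, range_add_one, filter_insert]
  split_ifs with h
  · rw [card_insert_of_notMem (by simp)]; push_cast; ring
  · push_cast; ring

lemma hgt_of_le (x : Fin n → Bool) {j : ℕ} (hj : n ≤ j) : hgt x j = 2 * (wt x : ℤ) - j := by
  rw [hgt, onesUpTo_of_le x hj]

lemma isDownStep_iff (x : Fin n → Bool) (j : ℕ) :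
    isDownStep x j ↔ j < extLen x ∧ bitAt x j = false := by
  by_cases hj : j < n <;> simp [isDownStep, bitAt, hj]

lemma ncard_setOf_isDownStep (x : Fin n → Bool) (P : ℕ → Prop) [DecidablePred P] :
    {j | isDownStep x j ∧ P j}.ncard = #{j ∈ range (extLen x) | bitAt x j = false ∧ P j} := by
  rw [← Set.ncard_coe_finset]
  congr 1
  ext j
  simp only [isDownStep_iff, Set.mem_ofPred_eq, coe_filter, mem_range]
  tauto

def setBit (x : Fin n → Bool) (d : ℕ) (b : Bool) : Fin n → Bool :=
  fun t => if t.val = d then b else x t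

variable {x : Fin n → Bool} {d : ℕ}

lemma bitAt_setBit (hd : d < n) (b : Bool) (j : ℕ) :
    bitAt (setBit x d b) j = if j = d then b else bitAt x j := by
  unfold bitAt setBit
  split_ifs <;> simp_all

lemma hgt_setBit_false (hd : d < n) (hx : bitAt x d = true) (j : ℕ) :
    hgt (setBit x d false) j = hgt x j - if d < j then 2 else 0 := by
  induction j with
  | zero => simp [hgt_zero]
  | succ j ih =>
    rw [hgt_succ, hgt_succ, ih, bitAt_setBit hd]
    rcases lt_trichotomy j d with hj | rfl | hj
    · simp only [hj.ne, if_false]; split_ifs <;> omega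
    · simp only [hx, ↓reduceIte, Bool.false_eq_true]; split_ifs <;> omega
    · simp only [hj.ne', if_false]; split_ifs <;> omega

lemma wt_setBit_false (hd : d < n) (hx : bitAt x d = true) : wt (setBit x d false) + 1 = wt x := by
  have := hgt_setBit_false hd hx n
  rw [hgt_of_le _ le_rfl, hgt_of_le _ le_rfl, if_pos hd] at this
  omega

lemma setBit_true_setBit_false (hx : bitAt x d = true) : setBit (setBit x d false) d true = x := by
  funext t
  unfold setBit
  split_ifs with ht
  · rw [← hx, ← ht, bitAt_val]
  · rfl

end Bitstring

section Saturation

variable {n k i : ℕ}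

lemma exists_lexUp_of_two_mul_add_one_le {x : Fin n → Bool} (hx : wt x = k)
    (hkn : 2 * k + 1 ≤ n) (hi : i < n - k) : ∃ y, lexUp n k i x y := by
  have hE : extLen x = n := by rw [extLen, hx]; omega
  have hS : #{j ∈ range n | bitAt x j = false} = n - k := by
    have := card_filter_add_card_filter_not (s := range n) (fun j => bitAt x j = true)
    simp only [Bool.not_eq_true, card_filter_bitAt_eq_true x le_rfl, card_range] at this
    omega
  obtain ⟨d, hdS, hd⟩ := exists_card_filter_lt_eq (κ := fun j => toLex (hgt x j, j))
    (fun a b hab => congrArg (fun p => (ofLex p).2) hab) _ i (hS ▸ hi)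
  rw [mem_filter, mem_range] at hdS
  refine ⟨_, hx, d, hdS.1, (isDownStep_iff x d).2 ⟨hE.symm ▸ hdS.1, hdS.2⟩, ?_, rfl⟩
  rw [ncard_setOf_isDownStep, hE, ← hd, filter_filter]
  simp only [Prod.Lex.toLex_lt_toLex, eq_comm]

open OrderDual in
lemma filter_up_above_setBit_false {y : Fin n → Bool} {d L : ℕ} (hd : d < n)
    (hyd : bitAt y d = true) (hL : n ≤ L) :
    {j ∈ range L | bitAt (setBit y d false) j = true ∧
        (j < d ∧ hgt (setBit y d false) d ≤ hgt (setBit y d false) j ∨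
          d < j ∧ hgt (setBit y d false) d ≤ hgt (setBit y d false) j + 1)} =
      {j ∈ range n | bitAt y j = true ∧ toLex (hgt y d, toDual d) < toLex (hgt y j, toDual j)} := by
  ext j
  simp only [mem_filter, mem_range, bitAt_setBit hd, hgt_setBit_false hd hyd,
    Prod.Lex.toLex_lt_toLex, toDual_lt_toDual, lt_irrefl, if_false]
  by_cases hyj : bitAt y j = true
  · have hjn := lt_of_bitAt_eq_true hyj
    rcases lt_trichotomy j d with hj | rfl | hj
    · simp only [hj.ne, lt_asymm hj, hyj, ↓reduceIte, sub_zero, true_and, false_and, or_false]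
      omega
    · simp only [lt_irrefl, ↓reduceIte, Bool.false_eq_true, false_and, and_false, or_false]
    · simp only [hj.ne', hj, hyj, ↓reduceIte, sub_zero, true_and]
      omega
  · simp [hyj]

lemma exists_lexUp_of_le_two_mul_add_one {y : Fin n → Bool} (hy : wt y = k + 1)
    (hkn : n ≤ 2 * k + 1) (hi : i ≤ k) : ∃ x, lexUp n k i x y := by
  have hU : #{j ∈ range n | bitAt y j = true} = k + 1 := by
    rw [card_filter_bitAt_eq_true y le_rfl, hy]
  obtain ⟨d, hdU, hd⟩ := exists_card_filter_lt_eq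
    (κ := fun j => toLex (hgt y j, OrderDual.toDual j))
    (fun a b hab => by simpa using congrArg (fun p => (ofLex p).2) hab)
    {j ∈ range n | bitAt y j = true} i (by omega)
  rw [mem_filter, mem_range] at hdU
  obtain ⟨hdn, hyd⟩ := hdU
  set x := setBit y d false
  have hwx : wt x = k := by
    have : wt x + 1 = wt y := wt_setBit_false hdn hyd
    omega
  have hE : extLen x = 2 * k + 1 := by rw [extLen, hwx]; omega
  have hL : hgt x (2 * k + 1) = -1 := by rw [hgt_of_le x hkn, hwx]; push_cast; ring
  have hxd : bitAt x d = false := by simp [x, bitAt_setBit hdn]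
  refine ⟨x, hwx, d, hdn, (isDownStep_iff x d).2 ⟨by omega, hxd⟩, ?_,
    (setBit_true_setBit_false hyd).symm⟩
  rw [ncard_setOf_isDownStep, hE, card_down_above_eq_card_up_above (hgt x) (bitAt x)
    (hgt_succ x) (hgt_zero x) hL (by omega) hxd, filter_up_above_setBit_false hdn hyd hkn,
    ← hd, filter_filter]

end Saturation

lemma two_mul_add_one_le_of_choose_le_choose_succ {n k : ℕ} (hk : k ≤ n)
    (h : n.choose k ≤ n.choose (k + 1)) : 2 * k + 1 ≤ n := by
  have : n.choose k * (k + 1) ≤ n.choose k * (n - k) := by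
    rw [← Nat.choose_succ_right_eq]; exact Nat.mul_le_mul_right _ h
  have := Nat.le_of_mul_le_mul_left this (Nat.choose_pos hk)
  omega

lemma le_two_mul_add_one_of_choose_succ_le_choose {n k : ℕ}
    (h : n.choose (k + 1) ≤ n.choose k) : n ≤ 2 * k + 1 := by
  rcases le_or_gt n k with hnk | hkn
  · omega
  have : n.choose k * (n - k) ≤ n.choose k * (k + 1) := by
    rw [← Nat.choose_succ_right_eq]; exact Nat.mul_le_mul_right _ h
  have := Nat.le_of_mul_le_mul_left this (Nat.choose_pos hkn.le)
  omega

theorem lexical_matching_saturates_general (n k i : ℕ) (hk : k ≤ n - 1)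
    (hi : i ≤ max k (n - k - 1)) :
    ((n.choose k ≤ n.choose (k + 1)) →
      ∀ x : Fin n → Bool, wt x = k → ∃ y, lexUp n k i x y) ∧
    ((n.choose (k + 1) ≤ n.choose k) →
      ∀ y : Fin n → Bool, wt y = k + 1 → ∃ x, lexUp n k i x y) := by
  refine ⟨fun hc x hx => ?_, fun hc y hy => ?_⟩
  · have hkn := two_mul_add_one_le_of_choose_le_choose_succ (by omega) hc
    exact exists_lexUp_of_two_mul_add_one_le hx hkn (by omega)
  · have hkn := le_two_mul_add_one_of_choose_succ_le_choose hc
    exact exists_lexUp_of_le_two_mul_add_one hy hkn (by omega)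

/-- For `0 ≤ k ≤ n−1` and `0 ≤ i ≤ l := max{k, n−k−1}`, the `i`-lexical matching `M^i_{n,k}`
saturates all vertices in the smaller of the two levels `k` and `k+1` of the `n`-cube. -/
theorem lexical_matching_saturates (n k i : ℕ) (hn : 1 ≤ n) (hk : k ≤ n - 1)
    (hi : i ≤ max k (n - k - 1)) :
    ((n.choose k ≤ n.choose (k + 1)) →
      ∀ x : Fin n → Bool, wt x = k → ∃ y, lexUp n k i x y) ∧
    ((n.choose (k + 1) ≤ n.choose k) →
      ∀ y : Fin n → Bool, wt y = k + 1 → ∃ x, lexUp n k i x y) :=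
  lexical_matching_saturates_general n k i hk hi
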